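/- Let D be a directed graph representing a gammoid with sources S and sinks Z, where each source has in-degree 0 and out-degree 1 and each sink has in-degree 1 and out-degree 0. If the gammoid is k-colorable with all color classes of full rank r = |Z| (so |S| = kr), then every sink z has exactly k units of incoming flow in the superimposed flow f obtained from the k vertex-disjoint-path systems, and consequently z forms a singleton tree in the forest of edges with flow strictly between 0 and k. -/

import Mathlib

/-!
Each colour class has exactly `r` paths, one starting at each of its `r` sources, so every path
starts at a source. A source has no in-edges while the sink `z` has its unique in-neighbour `u₀`,
so no path consists of `z` alone; and since `z` has no out-edges, `z` can only be the last vertex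
of a path. Hence the unique path of each colour that ends at `z` runs through the edge `(u₀, z)`,
and no other path of that colour meets `z`. The flow into `z` is therefore `k` on `(u₀, z)` and
`0` elsewhere, and the flow out of `z` is `0`.
-/

namespace List

variable {α : Type*} {R : α → α → Prop} {l : List α} {a b : α}

theorem IsChain.exists_rel_suffix_pair (hl : l.IsChain R) (ha : l.head? = some a)
    (hb : l.getLast? = some b) (hab : a ≠ b) : ∃ u, R u b ∧ [u, b] <:+ l := by
  obtain rfl | ⟨L, b', rfl⟩ := l.eq_nil_or_concat'
  · simp at ha
  rw [getLast?_concat, Option.some_inj] at hb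
  subst b'
  obtain rfl | ⟨L', u, rfl⟩ := L.eq_nil_or_concat'
  · exact absurd (Option.some_inj.mp ha).symm hab
  have hsuffix : [u, b] <:+ L' ++ [u] ++ [b] := ⟨L', by simp⟩
  exact ⟨u, isChain_pair.mp (hl.suffix hsuffix), hsuffix⟩

theorem IsChain.getLast?_eq_of_mem (hl : l.IsChain R) (hb : b ∈ l) (hout : ∀ c, ¬R b c) :
    l.getLast? = some b := by
  obtain ⟨s, _ | ⟨c, t⟩, rfl⟩ := append_of_mem hb
  · exact getLast?_concat
  · exact absurd (isChain_cons_cons.mp (hl.suffix ⟨s, rfl⟩)).1 (hout c)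

end List

theorem Finset.mem_of_subset_range_of_card_le {ι α : Type*} [Fintype ι] (f : ι → α)
    (s : Finset α) (hs : ∀ a ∈ s, ∃ i, f i = a) (hcard : Fintype.card ι ≤ s.card) (i : ι) :
    f i ∈ s := by
  classical
  have hsub : s ⊆ univ.image f := fun a ha => by simpa using hs a ha
  have heq : s = univ.image f :=
    eq_of_subset_of_card_le hsub (card_image_le.trans (by simpa using hcard))
  exact heq ▸ mem_image_of_mem f (mem_univ i)

theorem Nat.card_subtype_prod_eq_of_existsUnique {ι κ : Type*} (Q : ι → κ → Prop)
    (h : ∀ i, ∃! j, Q i j) : Nat.card {ij : ι × κ // Q ij.1 ij.2} = Nat.card ι := by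
  refine Nat.card_eq_of_bijective (fun ij => ij.1.1) ⟨?_, fun i => ?_⟩
  · rintro ⟨⟨i, j⟩, hij⟩ ⟨⟨i', j'⟩, hij'⟩ (rfl : i = i')
    obtain rfl := (h i).unique hij hij'
    rfl
  · obtain ⟨j, hj, -⟩ := h i
    exact ⟨⟨(i, j), hj⟩, rfl⟩

section Paths

variable {V ι : Type*} {E : V → V → Prop} {p : ι → List V}

theorem Nat.card_infix_pair_eq_zero_of_not_rel (hp : ∀ i, (p i).IsChain E) {u v : V}
    (huv : ¬E u v) : Nat.card {i // [u, v] <:+: p i} = 0 :=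
  have : IsEmpty {i // [u, v] <:+: p i} :=
    ⟨fun ⟨i, hi⟩ => huv (List.isChain_pair.mp ((hp i).infix hi))⟩
  Nat.card_of_isEmpty

theorem existsUnique_infix_pair_of_existsUnique_getLast? (hp : ∀ i, (p i).IsChain E)
    {z u₀ : V} (hout : ∀ v, ¬E z v) (hin : ∀ u, E u z ↔ u = u₀)
    (hhead : ∀ i, ∀ s ∈ (p i).head?, ∀ u, ¬E u s) (hend : ∃! i, (p i).getLast? = some z) :
    ∃! i, [u₀, z] <:+: p i := by
  obtain ⟨i, hi, hi_unique⟩ := hend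
  refine ⟨i, ?_, fun i' hi' => hi_unique i' ((hp i').getLast?_eq_of_mem ?_ hout)⟩
  · have hne : p i ≠ [] := List.ne_nil_of_mem (List.mem_of_getLast? hi)
    have hs := List.head?_eq_some_head hne
    have hsz : (p i).head hne ≠ z := fun h => hhead i _ hs u₀ (h ▸ (hin u₀).mpr rfl)
    obtain ⟨u, huz, hsuffix⟩ := (hp i).exists_rel_suffix_pair hs hi hsz
    exact (hin u).mp huz ▸ hsuffix.isInfix
  · exact List.IsInfix.mem (by simp) hi'

end Paths

open Finset in
theorem sink_is_singleton_tree_general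
    {V : Type*} [Fintype V]
    (E : V → V → Prop) [DecidableRel E]
    (S Z : Finset V) (r k : ℕ)
    -- sources: in-degree 0, out-degree 1
    (hsrc : ∀ s ∈ S, (∀ u, ¬ E u s) ∧ (univ.filter fun u => E s u).card = 1)
    -- sinks: in-degree 1, out-degree 0
    (hsinkin : ∀ z ∈ Z, (univ.filter fun u => E u z).card = 1)
    (hsinkout : ∀ z ∈ Z, ∀ u, ¬ E z u)
    -- the k color classes, each of full rank r, partitioning S
    (C : Fin k → Finset V)
    (hCsub : ∀ i, C i ⊆ S) (hCcard : ∀ i, (C i).card = r)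
    -- for each color class, r vertex-disjoint directed paths from C i to Z
    (P : Fin k → Fin r → List V)
    (hchain : ∀ i j, (P i j).Chain' E)
    (hstart : ∀ i, ∀ s ∈ C i, ∃! j, (P i j).head? = some s)
    (hend : ∀ i, ∀ z ∈ Z, ∃! j, (P i j).getLast? = some z)
    -- the superimposed flow: f(u,v) = number of paths traversing edge (u,v)
    (f : V → V → ℕ)
    (hf : ∀ u v : V,
      f u v = Nat.card {ij : Fin k × Fin r // [u, v] <:+: P ij.1 ij.2}) :
    ∀ z ∈ Z,
      (∑ u, f u z) = k ∧
      (∀ u, ¬ (0 < f u z ∧ f u z < k)) ∧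
      (∀ u, ¬ (0 < f z u ∧ f z u < k)) := by
  classical
  intro z hz
  have hpaths : ∀ ij : Fin k × Fin r, (P ij.1 ij.2).IsChain E := fun ij => hchain ij.1 ij.2
  obtain ⟨u₀, hu₀⟩ := card_eq_one.mp (hsinkin z hz)
  have hin : ∀ u, E u z ↔ u = u₀ := fun u => by simpa using congrArg (u ∈ ·) hu₀
  have hstart_mem : ∀ i j, ∃ s ∈ C i, (P i j).head? = some s := fun i j => by
    simpa [eq_comm] using mem_of_subset_range_of_card_le (fun j => (P i j).head?)
      ((C i).map .some) (by simpa using fun s hs => (hstart i s hs).exists) (by simp [hCcard]) j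
  have hhead : ∀ i j, ∀ s ∈ (P i j).head?, ∀ u, ¬E u s := by
    intro i j s hs
    obtain ⟨s', hs', hs's⟩ := hstart_mem i j
    obtain rfl : s' = s := Option.some_inj.mp (hs's.symm.trans hs)
    exact (hsrc s' (hCsub i hs')).1
  have hflow_in : ∀ u, f u z = if u = u₀ then k else 0 := by
    intro u
    rw [hf]
    split_ifs with hu
    · subst hu
      rw [Nat.card_subtype_prod_eq_of_existsUnique _ fun i =>
          existsUnique_infix_pair_of_existsUnique_getLast? (hchain i) (hsinkout z hz)
            hin (hhead i) (hend i z hz),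
        Nat.card_eq_fintype_card, Fintype.card_fin]
    · exact Nat.card_infix_pair_eq_zero_of_not_rel hpaths (mt (hin u).mp hu)
  have hflow_out : ∀ u, f z u = 0 := fun u =>
    (hf z u).trans (Nat.card_infix_pair_eq_zero_of_not_rel hpaths (hsinkout z hz u))
  refine ⟨by simp [hflow_in], fun u => ?_, fun u => by simp [hflow_out]⟩
  rw [hflow_in]
  split_ifs <;> omega

open Finset in
/-- Observation 3: In a graphical representation of a
`k`-colorable gammoid with all color classes of full rank `r = |Z|`, every
sink `z` receives exactly `k` units of the superimposed flow `f`, and hence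
`z` is incident to no edge with flow strictly between `0` and `k` (it forms a
singleton tree in the corresponding forest). -/
theorem sink_is_singleton_tree
    {V : Type*} [Fintype V] [DecidableEq V]
    (E : V → V → Prop) [DecidableRel E]
    (S Z : Finset V) (r k : ℕ) (hr : Z.card = r)
    -- sources: in-degree 0, out-degree 1
    (hsrc : ∀ s ∈ S, (∀ u, ¬ E u s) ∧ (univ.filter fun u => E s u).card = 1)
    -- sinks: in-degree 1, out-degree 0
    (hsinkin : ∀ z ∈ Z, (univ.filter fun u => E u z).card = 1)
    (hsinkout : ∀ z ∈ Z, ∀ u, ¬ E z u)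
    (hS : S.card = k * r)
    -- the k color classes, each of full rank r, partitioning S
    (C : Fin k → Finset V)
    (hCsub : ∀ i, C i ⊆ S) (hCcard : ∀ i, (C i).card = r)
    (hCdisj : ∀ i j, i ≠ j → Disjoint (C i) (C j))
    (hCcover : ∀ s ∈ S, ∃ i, s ∈ C i)
    -- for each color class, r vertex-disjoint directed paths from C i to Z
    (P : Fin k → Fin r → List V)
    (hchain : ∀ i j, (P i j).Chain' E)
    (hnodup : ∀ i j, (P i j).Nodup)
    (hdisjpaths : ∀ i, ∀ j₁ j₂, j₁ ≠ j₂ →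
      Disjoint (P i j₁).toFinset (P i j₂).toFinset)
    (hstart : ∀ i, ∀ s ∈ C i, ∃! j, (P i j).head? = some s)
    (hend : ∀ i, ∀ z ∈ Z, ∃! j, (P i j).getLast? = some z)
    -- the superimposed flow: f(u,v) = number of paths traversing edge (u,v)
    (f : V → V → ℕ)
    (hf : ∀ u v : V,
      f u v = Nat.card {ij : Fin k × Fin r // [u, v] <:+: P ij.1 ij.2}) :
    ∀ z ∈ Z,
      (∑ u, f u z) = k ∧
      (∀ u, ¬ (0 < f u z ∧ f u z < k)) ∧
      (∀ u, ¬ (0 < f z u ∧ f z u < k)) :=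
  sink_is_singleton_tree_general E S Z r k hsrc hsinkin hsinkout C hCsub hCcard P hchain hstart hend
    f hf
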